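/- arXiv:1202.1223 — 2 statements merged into one kernel-verified Lean document; each statement's English description precedes it below -/
import Mathlib

section
/- Every non-binary phylogenetic tree T with n leaves admits a binary phylogenetic tree T' with n leaves such that Φ(T') > Φ(T). Consequently, any tree attaining the maximum total cophenetic index among all trees with n leaves is binary. -/
/-!
Resolving a node with children `a, b, c, …` into one with children `(a b), c, …` inserts a new
internal node above `a` and `b`. This raises by one the depth of the lowest common ancestor of
every pair of leaves below `a` or `b`, and leaves every other cophenetic value unchanged; pairs
with one leaf in `a` and one in `b` exist, so `Φ` strictly increases. Each such step lowers the
total number of surplus children, so finitely many of them turn a non-binary tree into a binary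
one with larger `Φ`.
-/

/-- Rooted trees with natural-number-labeled leaves. -/
inductive PTree where
  | leaf : ℕ → PTree
  | node : List PTree → PTree

namespace PTree

/-- The list of leaf labels of a tree, in left-to-right order. -/
def leaves : PTree → List ℕ
  | .leaf i => [i]
  | .node ts => ts.attach.flatMap (fun t => leaves t.1)
decreasing_by have := List.sizeOf_lt_of_mem t.2; simp_wf; omega

/-- The depth (number of arcs from the root) of the leaf labeled `i`. -/
def leafDepth : PTree → ℕ → ℕ
  | .leaf _, _ => 0
  | .node ts, i =>
      (ts.attach.map (fun t => if i ∈ leaves t.1 then 1 + leafDepth t.1 i else 0)).sum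
decreasing_by have := List.sizeOf_lt_of_mem t.2; simp_wf; omega

/-- The cophenetic value of `i` and `j`: the depth of their lowest common ancestor. -/
def cophen : PTree → ℕ → ℕ → ℕ
  | .leaf _, _, _ => 0
  | .node ts, i, j =>
      (ts.attach.map (fun t =>
        if i ∈ leaves t.1 ∧ j ∈ leaves t.1 then 1 + cophen t.1 i j else 0)).sum
decreasing_by have := List.sizeOf_lt_of_mem t.2; simp_wf; omega

/-- The nodal distance between the leaves labeled `i` and `j`:
the number of edges on the undirected path joining them. -/
def ndist : PTree → ℕ → ℕ → ℕ
  | .leaf _, _, _ => 0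
  | .node ts, i, j =>
      (ts.attach.map (fun t =>
        if i ∈ leaves t.1 ∧ j ∈ leaves t.1 then ndist t.1 i j
        else if i ∈ leaves t.1 then 1 + leafDepth t.1 i
        else if j ∈ leaves t.1 then 1 + leafDepth t.1 j
        else 0)).sum
decreasing_by have := List.sizeOf_lt_of_mem t.2; simp_wf; omega

/-- The list of the numbers of descendant leaves of each internal node,
with the root (if internal) first. -/
def allInternalSizes : PTree → List ℕ
  | .leaf _ => []
  | .node ts => (PTree.node ts).leaves.length :: ts.attach.flatMap (fun t => allInternalSizes t.1)
decreasing_by have := List.sizeOf_lt_of_mem t.2; simp_wf; omega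

/-- The total cophenetic index: sum of cophenetic values over pairs of distinct leaves. -/
def Phi (T : PTree) : ℕ :=
  ∑ i ∈ T.leaves.toFinset, ∑ j ∈ T.leaves.toFinset, if i < j then cophen T i j else 0

/-- The Sackin index: the sum of the depths of the leaves. -/
def Sackin (T : PTree) : ℕ := ∑ i ∈ T.leaves.toFinset, leafDepth T i

/-- The total area: the sum of the nodal distances between pairs of distinct leaves. -/
def Darea (T : PTree) : ℕ :=
  ∑ i ∈ T.leaves.toFinset, ∑ j ∈ T.leaves.toFinset, if i < j then ndist T i j else 0

/-- A tree is binary when every internal node has exactly two children. -/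
def IsBinary : PTree → Prop
  | .leaf _ => True
  | .node ts => ts.length = 2 ∧ ∀ t ∈ ts.attach, IsBinary t.1
decreasing_by have := List.sizeOf_lt_of_mem t.2; simp_wf; omega

/-- A tree is proper when every internal node has at least two children. -/
def Proper : PTree → Prop
  | .leaf _ => True
  | .node ts => 2 ≤ ts.length ∧ ∀ t ∈ ts.attach, Proper t.1
decreasing_by have := List.sizeOf_lt_of_mem t.2; simp_wf; omega

/-- `T` is a phylogenetic tree with `n` leaves: a proper rooted tree whose leaves are
bijectively labeled by `{1, …, n}`. -/
def IsPhylo (n : ℕ) (T : PTree) : Prop :=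
  Proper T ∧ T.leaves.Nodup ∧ T.leaves.toFinset = Finset.Icc 1 n

/-- A rooted caterpillar: a binary tree all of whose internal nodes have a leaf child. -/
def IsCaterpillar : PTree → Prop
  | .leaf _ => True
  | .node ts => ts.length = 2 ∧ (∃ t ∈ ts, ∃ i, t = PTree.leaf i) ∧
      ∀ t ∈ ts.attach, IsCaterpillar t.1
decreasing_by have := List.sizeOf_lt_of_mem t.2; simp_wf; omega

/-- A binary tree is maximally balanced when every internal node is balanced, i.e. the
numbers of descendant leaves of its two children differ by at most one. -/
def MaxBalanced : PTree → Prop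
  | .leaf _ => True
  | .node [a, b] =>
      |(a.leaves.length : ℤ) - (b.leaves.length : ℤ)| ≤ 1 ∧ MaxBalanced a ∧ MaxBalanced b
  | .node _ => False

/-- Canonical representative of an isomorphism class of binary trees: at every internal node
the subtree containing the smallest leaf label comes first. -/
def Canonical : PTree → Prop
  | .leaf _ => True
  | .node [a, b] => a.leaves.minimum < b.leaves.minimum ∧ Canonical a ∧ Canonical b
  | .node _ => False

/-- The rooted caterpillar with `n` leaves labeled `1, …, n` (for `n ≥ 1`). -/
def caterpillar : ℕ → PTree
  | 0 => .leaf 1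
  | 1 => .leaf 1
  | n + 2 => .node [caterpillar (n + 1), .leaf (n + 2)]

/-- `Replace T t₀ t₀' T'` holds when `T'` is obtained from `T` by replacing the subtree `t₀`
of `T` rooted at some node by the tree `t₀'`. -/
inductive Replace : PTree → PTree → PTree → PTree → Prop where
  | here (t₀ t₀' : PTree) : Replace t₀ t₀ t₀' t₀'
  | child (l r : List PTree) (a b t₀ t₀' : PTree) :
      Replace a t₀ t₀' b → Replace (.node (l ++ a :: r)) t₀ t₀' (.node (l ++ b :: r))

/-- The probability of a binary phylogenetic tree with `n` leaves under the Yule model. -/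
noncomputable def yuleP (n : ℕ) (T : PTree) : ℝ :=
  (2 ^ (n - 1) / (n.factorial : ℝ)) *
    ((allInternalSizes T).map (fun k => ((k : ℝ) - 1)⁻¹)).prod


@[simp] lemma leaves_node (ts : List PTree) : leaves (.node ts) = ts.flatMap leaves := by
  simp [leaves]

lemma cophen_node (ts : List PTree) (i j : ℕ) :
    cophen (.node ts) i j =
      (ts.map fun t => if i ∈ leaves t ∧ j ∈ leaves t then 1 + cophen t i j else 0).sum := by
  simp [cophen]

lemma cophen_node_append_cons (l r : List PTree) (a : PTree) (i j : ℕ) :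
    cophen (.node (l ++ a :: r)) i j =
      cophen (.node l) i j + (if i ∈ leaves a ∧ j ∈ leaves a then 1 + cophen a i j else 0) +
        cophen (.node r) i j := by
  simp only [cophen_node, List.map_append, List.map_cons, List.sum_append, List.sum_cons]
  omega

lemma proper_node {ts : List PTree} :
    Proper (.node ts) ↔ 2 ≤ ts.length ∧ ∀ t ∈ ts, Proper t := by
  simp [Proper]

lemma isBinary_node {ts : List PTree} :
    IsBinary (.node ts) ↔ ts.length = 2 ∧ ∀ t ∈ ts, IsBinary t := by
  simp [IsBinary]

lemma cophen_comm : ∀ (T : PTree) (i j : ℕ), cophen T i j = cophen T j i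
  | .leaf _, _, _ => by simp [cophen]
  | .node ts, i, j => by
    rw [cophen_node, cophen_node]
    refine congrArg List.sum (List.map_congr_left fun t ht => ?_)
    have := List.sizeOf_lt_of_mem ht
    rw [cophen_comm t i j]
    exact if_congr and_comm rfl rfl
termination_by T => sizeOf T

lemma leaves_ne_nil_of_proper : ∀ {T : PTree}, Proper T → leaves T ≠ []
  | .leaf _, _ => by simp [leaves]
  | .node ts, hT => by
    obtain ⟨hlen, hts⟩ := proper_node.mp hT
    obtain ⟨t, ht⟩ := List.exists_mem_of_length_pos (by omega : 0 < ts.length)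
    have := List.sizeOf_lt_of_mem ht
    obtain ⟨i, hi⟩ := List.exists_mem_of_ne_nil _ (leaves_ne_nil_of_proper (hts t ht))
    rw [leaves_node]
    exact List.ne_nil_of_mem (List.mem_flatMap.mpr ⟨t, ht, hi⟩)
termination_by T => sizeOf T

def excess : PTree → ℕ
  | .leaf _ => 0
  | .node ts => (ts.length - 2) + (ts.attach.map fun t => excess t.1).sum
decreasing_by have := List.sizeOf_lt_of_mem t.2; simp_wf; omega

lemma excess_node (ts : List PTree) :
    excess (.node ts) = (ts.length - 2) + (ts.map excess).sum := by
  simp [excess]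

structure CophenLt (T T' : PTree) : Prop where
  leaves_eq : leaves T' = leaves T
  cophen_le : ∀ i j, cophen T i j ≤ cophen T' i j
  exists_cophen_lt : ∃ i ∈ leaves T, ∃ j ∈ leaves T, i ≠ j ∧ cophen T i j < cophen T' i j

lemma CophenLt.phi_lt {T T' : PTree} (h : CophenLt T T') : Phi T < Phi T' := by
  have hle : ∀ i j, (if i < j then cophen T i j else 0) ≤ if i < j then cophen T' i j else 0 :=
    fun i j => by split_ifs <;> simp [h.cophen_le]
  obtain ⟨i, hi, j, hj, hij, hlt⟩ := h.exists_cophen_lt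
  wlog hij' : i < j generalizing i j
  · exact this j hj i hi hij.symm (by rwa [cophen_comm T, cophen_comm T']) (by omega)
  unfold Phi
  rw [h.leaves_eq]
  refine Finset.sum_lt_sum (fun i _ => Finset.sum_le_sum fun j _ => hle i j)
    ⟨i, List.mem_toFinset.mpr hi, Finset.sum_lt_sum (fun j _ => hle i j)
      ⟨j, List.mem_toFinset.mpr hj, by simpa [hij'] using hlt⟩⟩

lemma CophenLt.node_append_cons {a b : PTree} (h : CophenLt a b) (l r : List PTree) :
    CophenLt (.node (l ++ a :: r)) (.node (l ++ b :: r)) := by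
  have hmid : ∀ i j, (if i ∈ leaves a ∧ j ∈ leaves a then 1 + cophen a i j else 0) ≤
      if i ∈ leaves b ∧ j ∈ leaves b then 1 + cophen b i j else 0 := fun i j => by
    rw [h.leaves_eq]; split_ifs <;> simp [h.cophen_le]
  obtain ⟨i, hi, j, hj, hij, hlt⟩ := h.exists_cophen_lt
  refine ⟨by simp [h.leaves_eq], fun i j => ?_, ⟨i, ?_, j, ?_, hij, ?_⟩⟩
  · simp only [cophen_node_append_cons]
    have := hmid i j
    omega
  · simp [hi]
  · simp [hj]
  · have hib : i ∈ leaves b := h.leaves_eq ▸ hi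
    have hjb : j ∈ leaves b := h.leaves_eq ▸ hj
    simp only [cophen_node_append_cons, if_pos (And.intro hi hj), if_pos (And.intro hib hjb)]
    omega

namespace Replace

variable {T t t' T' : PTree}

lemma leaves_sublist (h : Replace T t t' T') : (leaves t).Sublist (leaves T) := by
  induction h with
  | here => exact .refl _
  | child l r a b _ _ _ ih =>
    refine ih.trans ?_
    simp only [leaves_node, List.flatMap_append, List.flatMap_cons]
    exact (List.sublist_append_left _ _).trans (List.sublist_append_right _ _)

lemma proper_left (h : Replace T t t' T') (hT : Proper T) : Proper t := by
  induction h with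
  | here => exact hT
  | child l r a b _ _ _ ih => exact ih ((proper_node.mp hT).2 a (by simp))

lemma proper_right (h : Replace T t t' T') (hT : Proper T) (ht' : Proper t') : Proper T' := by
  induction h with
  | here => exact ht'
  | child l r a b _ _ _ ih =>
    obtain ⟨hlen, hch⟩ := proper_node.mp hT
    refine proper_node.mpr ⟨by simpa using hlen, fun s hs => ?_⟩
    rcases List.mem_append.mp hs with hs | hs
    · exact hch s (by simp [hs])
    rcases List.mem_cons.mp hs with rfl | hs
    · exact ih (hch a (by simp)) ht'
    · exact hch s (by simp [hs])

lemma excess_lt (h : Replace T t t' T') (hlt : excess t' < excess t) : excess T' < excess T := by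
  induction h with
  | here => exact hlt
  | child l r a b _ _ _ ih =>
    simp only [excess_node, List.map_append, List.map_cons, List.sum_append, List.sum_cons,
      List.length_append, List.length_cons]
    have := ih hlt
    omega

lemma cophenLt (h : Replace T t t' T') (hlt : CophenLt t t') : CophenLt T T' := by
  induction h with
  | here => exact hlt
  | child l r a b _ _ _ ih => exact (ih hlt).node_append_cons l r

end Replace

lemma cophenLt_regroup {a b : PTree} {ts : List PTree}
    (hnd : (leaves (.node (a :: b :: ts))).Nodup) (ha : leaves a ≠ []) (hb : leaves b ≠ []) :
    CophenLt (.node (a :: b :: ts)) (.node (.node [a, b] :: ts)) := by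
  obtain ⟨i, hi⟩ := List.exists_mem_of_ne_nil _ ha
  obtain ⟨j, hj⟩ := List.exists_mem_of_ne_nil _ hb
  have hab : ∀ x ∈ leaves a, ∀ y ∈ leaves b, x ≠ y := fun x hx y hy => by
    simp only [leaves_node, List.flatMap_cons, List.nodup_append] at hnd
    exact hnd.2.2 x hx y (List.mem_append_left _ hy)
  refine ⟨by simp, fun i j => ?_, ⟨i, by simp [hi], j, by simp [hj], hab i hi j hj, ?_⟩⟩
  · simp only [cophen_node, leaves_node, List.map_cons, List.map_nil, List.sum_cons,
      List.sum_nil, List.flatMap_cons, List.flatMap_nil, List.append_nil, List.mem_append]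
    split_ifs <;> first | omega | tauto
  · have hja : j ∉ leaves a := fun h => hab j h j hj rfl
    have hib : i ∉ leaves b := fun h => hab i hi i h rfl
    simp [cophen_node, hi, hj, hja, hib]

lemma excess_regroup (a b c : PTree) (ts : List PTree) :
    excess (.node (.node [a, b] :: c :: ts)) < excess (.node (a :: b :: c :: ts)) := by
  simp only [excess_node, List.map_cons, List.map_nil, List.sum_cons, List.sum_nil,
    List.length_cons, List.length_nil]
  omega

lemma proper_regroup {a b c : PTree} {ts : List PTree} (h : Proper (.node (a :: b :: c :: ts))) :
    Proper (.node (.node [a, b] :: c :: ts)) := by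
  have hch := (proper_node.mp h).2
  refine proper_node.mpr ⟨by simp, fun s hs => ?_⟩
  rcases List.mem_cons.mp hs with rfl | hs
  · refine proper_node.mpr ⟨by simp, fun s hs => hch s ?_⟩
    rcases List.mem_pair.mp hs with rfl | rfl <;> simp
  · exact hch s (by simp [hs])

lemma exists_replace_regroup_of_not_isBinary :
    ∀ {T : PTree}, Proper T → ¬ IsBinary T →
      ∃ a b c ts T', Replace T (.node (a :: b :: c :: ts)) (.node (.node [a, b] :: c :: ts)) T'
  | .leaf _, _, hnb => absurd (by simp [IsBinary]) hnb
  | .node (a :: b :: c :: ts), _, _ => ⟨a, b, c, ts, _, .here _ _⟩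
  | .node [a, b], hT, hnb => by
    obtain ⟨t, ht, hnbt⟩ : ∃ t ∈ [a, b], ¬ IsBinary t := by
      by_contra! h
      exact hnb (isBinary_node.mpr ⟨rfl, h⟩)
    have := List.sizeOf_lt_of_mem ht
    obtain ⟨a', b', c', ts', T', hR⟩ :=
      exists_replace_regroup_of_not_isBinary ((proper_node.mp hT).2 t ht) hnbt
    obtain ⟨l, r, hlr⟩ := List.append_of_mem ht
    rw [hlr]
    exact ⟨a', b', c', ts', _, Replace.child l r t T' _ _ hR⟩
  | .node [], hT, _ | .node [_], hT, _ => absurd (proper_node.mp hT).1 (by simp)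
termination_by T => sizeOf T

lemma exists_cophenLt_excess_lt {T : PTree} (hT : Proper T) (hnd : (leaves T).Nodup)
    (hnb : ¬ IsBinary T) : ∃ T', Proper T' ∧ excess T' < excess T ∧ CophenLt T T' := by
  obtain ⟨a, b, c, ts, T', hR⟩ := exists_replace_regroup_of_not_isBinary hT hnb
  have hnode := hR.proper_left hT
  have hch := (proper_node.mp hnode).2
  refine ⟨T', hR.proper_right hT (proper_regroup hnode), hR.excess_lt (excess_regroup a b c ts),
    hR.cophenLt (cophenLt_regroup (hnd.sublist hR.leaves_sublist) ?_ ?_)⟩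
  · exact leaves_ne_nil_of_proper (hch a (by simp))
  · exact leaves_ne_nil_of_proper (hch b (by simp))

lemma exists_isBinary_phi_lt {n : ℕ} {T : PTree} (hT : IsPhylo n T) (hnb : ¬ IsBinary T) :
    ∃ T', IsPhylo n T' ∧ IsBinary T' ∧ Phi T < Phi T' := by
  induction hk : excess T using Nat.strong_induction_on generalizing T with
  | _ k ih =>
    obtain ⟨T', hprop, hex, hlt⟩ := exists_cophenLt_excess_lt hT.1 hT.2.1 hnb
    have hT' : IsPhylo n T' := ⟨hprop, hlt.leaves_eq ▸ hT.2.1, hlt.leaves_eq ▸ hT.2.2⟩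
    by_cases hb : IsBinary T'
    · exact ⟨T', hT', hb, hlt.phi_lt⟩
    · obtain ⟨T'', hT'', hb'', hlt''⟩ := ih _ (hk ▸ hex) hT' hb rfl
      exact ⟨T'', hT'', hb'', hlt.phi_lt.trans hlt''⟩

end PTree

theorem nonbinary_not_maximal (n : ℕ) (T : PTree) (hT : PTree.IsPhylo n T) :
    (¬ PTree.IsBinary T →
      ∃ T', PTree.IsPhylo n T' ∧ PTree.IsBinary T' ∧ PTree.Phi T < PTree.Phi T') ∧
    ((∀ T', PTree.IsPhylo n T' → PTree.Phi T' ≤ PTree.Phi T) → PTree.IsBinary T) := by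
  refine ⟨PTree.exists_isBinary_phi_lt hT, fun hmax => ?_⟩
  by_contra hnb
  obtain ⟨T', hT', -, hlt⟩ := PTree.exists_isBinary_phi_lt hT hnb
  exact (hmax T' hT').not_gt hlt
end

section
/- A binary phylogenetic tree T with n leaves attains the minimum of the total cophenetic index Φ over all binary phylogenetic trees with n leaves if and only if T is maximally balanced. -/
/-! Splitting at the root gives `Φ(node [a, b]) = (Φ(a) + C(|a|, 2)) + (Φ(b) + C(|b|, 2))`. With
`halvingSum k = Σ_{j ≥ 1} ⌊k / 2^j⌋`, `phiMin n = Σ_{k < n} halvingSum k` and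
`G m = phiMin m + C(m, 2)` (`phiMinChild`), one has `phiMin (2m) = 2 G(m)`,
`phiMin (2m + 1) = G(m) + G(m + 1)`, and the increments `m + halvingSum m` of `G` are strictly
increasing. By this convexity `phiMin (x + y) ≤ G(x) + G(y)`, with equality iff `|x - y| ≤ 1`, so
induction on the tree gives `Φ(T) ≥ phiMin n`, with equality iff `T` is maximally balanced.
Maximally balanced trees exist for every `n ≥ 1`, hence `phiMin n` is the minimum. -/

theorem sum_sum_ite_lt_eq_choose_two (s : Finset ℕ) :
    (∑ i ∈ s, ∑ j ∈ s, if i < j then 1 else 0) = s.card.choose 2 := by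
  induction s using Finset.induction_on_max with
  | empty => simp
  | insert a s hmax ih =>
    have ha : a ∉ s := fun h => (hmax a h).false
    simp only [Finset.sum_insert ha, lt_irrefl, if_false, zero_add]
    rw [Finset.sum_eq_zero (fun j hj => if_neg (hmax j hj).not_gt),
      Finset.sum_congr rfl (fun i hi => by rw [if_pos (hmax i hi)]), Finset.sum_add_distrib, ih,
      Finset.card_insert_of_notMem ha, Finset.sum_const, smul_eq_mul, mul_one,
      Nat.choose_succ_succ', Nat.choose_one_right]
    ring

theorem sum_sum_ite_mem_and_mem {ι M : Type*} [AddCommMonoid M] [DecidableEq ι] {S A : Finset ι}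
    (hA : A ⊆ S) (F : ι → ι → M) :
    ∑ i ∈ S, ∑ j ∈ S, (if i ∈ A ∧ j ∈ A then F i j else 0) = ∑ i ∈ A, ∑ j ∈ A, F i j := by
  simp only [ite_and, Finset.sum_ite_irrel, Finset.sum_const_zero, Finset.sum_ite_mem,
    Finset.inter_eq_right.mpr hA]

namespace PTree

def halvingSum : ℕ → ℕ
  | 0 => 0
  | n + 1 => (n + 1) / 2 + halvingSum ((n + 1) / 2)

theorem halvingSum_mono : Monotone halvingSum := by
  intro a b hab
  induction b using Nat.strong_induction_on generalizing a with
  | _ b ih =>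
    match a, b with
    | 0, _ => simp [halvingSum]
    | a + 1, b + 1 =>
      rw [halvingSum, halvingSum]
      exact Nat.add_le_add (Nat.div_le_div_right hab)
        (ih _ (by omega) (Nat.div_le_div_right hab))
    | _ + 1, 0 => omega

def phiMin : ℕ → ℕ
  | 0 => 0
  | n + 1 => phiMin n + halvingSum n

/-- The least contribution to `Φ` of a child of the root with `m` leaves. -/
def phiMinChild (m : ℕ) : ℕ := phiMin m + m.choose 2

theorem phiMinChild_succ (m : ℕ) :
    phiMinChild (m + 1) = phiMinChild m + (m + halvingSum m) := by
  simp only [phiMinChild, phiMin, Nat.choose_succ_succ', Nat.choose_one_right]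
  ring

theorem halvingSum_two_mul (m : ℕ) : halvingSum (2 * m) = m + halvingSum m := by
  cases m with
  | zero => simp [halvingSum]
  | succ m => rw [show 2 * (m + 1) = 2 * m + 1 + 1 by ring, halvingSum,
      show (2 * m + 1 + 1) / 2 = m + 1 by omega]

theorem halvingSum_two_mul_add_one (m : ℕ) : halvingSum (2 * m + 1) = m + halvingSum m := by
  rw [halvingSum, show (2 * m + 1) / 2 = m by omega]

theorem phiMin_two_mul (m : ℕ) : phiMin (2 * m) = phiMinChild m + phiMinChild m := by
  induction m with
  | zero => rfl
  | succ m ih =>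
    rw [show 2 * (m + 1) = 2 * m + 1 + 1 by ring, phiMin, phiMin, ih, halvingSum_two_mul,
      halvingSum_two_mul_add_one, phiMinChild_succ]
    ring

theorem phiMin_two_mul_add_one (m : ℕ) :
    phiMin (2 * m + 1) = phiMinChild m + phiMinChild (m + 1) := by
  rw [phiMin, phiMin_two_mul, halvingSum_two_mul, phiMinChild_succ]
  ring

theorem phiMinChild_exchange (a k : ℕ) :
    phiMinChild (a + 1) + phiMinChild (a + 1 + k) < phiMinChild a + phiMinChild (a + k + 2) := by
  have := halvingSum_mono (show a ≤ a + k + 1 by omega)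
  rw [phiMinChild_succ a, show a + k + 2 = a + 1 + k + 1 by ring, phiMinChild_succ,
    show a + 1 + k = a + k + 1 by ring]
  omega

theorem phiMin_self_add_le (a k : ℕ) :
    phiMin (a + (a + k)) ≤ phiMinChild a + phiMinChild (a + k) := by
  induction k using Nat.strong_induction_on generalizing a with
  | _ k ih =>
    match k with
    | 0 => simp [← two_mul, phiMin_two_mul]
    | 1 => simp [show a + (a + 1) = 2 * a + 1 by ring, phiMin_two_mul_add_one]
    | k + 2 =>
      have := ih k (by omega) (a + 1)
      have := phiMinChild_exchange a k
      rw [show a + (a + (k + 2)) = a + 1 + (a + 1 + k) by ring, ← add_assoc a k 2]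
      omega

theorem phiMin_self_add_lt (a k : ℕ) :
    phiMin (a + (a + k + 2)) < phiMinChild a + phiMinChild (a + k + 2) := by
  rw [show a + (a + k + 2) = a + 1 + (a + 1 + k) by ring]
  exact (phiMin_self_add_le (a + 1) k).trans_lt (phiMinChild_exchange a k)

theorem phiMin_add_le_phiMinChild (x y : ℕ) : phiMin (x + y) ≤ phiMinChild x + phiMinChild y := by
  wlog h : x ≤ y generalizing x y
  · rw [add_comm x, add_comm (phiMinChild x)]
    exact this y x (by omega)
  obtain ⟨k, rfl⟩ := Nat.exists_eq_add_of_le h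
  exact phiMin_self_add_le x k

theorem phiMinChild_add_eq_phiMin_iff (x y : ℕ) :
    phiMinChild x + phiMinChild y = phiMin (x + y) ↔ x ≤ y + 1 ∧ y ≤ x + 1 := by
  wlog h : x ≤ y generalizing x y
  · rw [add_comm x, add_comm (phiMinChild x), this y x (by omega), and_comm]
  obtain ⟨k, rfl⟩ := Nat.exists_eq_add_of_le h
  match k with
  | 0 => exact iff_of_true (by rw [add_zero, ← two_mul x, phiMin_two_mul]) (by omega)
  | 1 =>
    refine iff_of_true ?_ (by omega)
    rw [show x + (x + 1) = 2 * x + 1 by ring, phiMin_two_mul_add_one]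
  | k + 2 =>
    have := phiMin_self_add_lt x k
    rw [← add_assoc x k 2]
    exact iff_of_false (by omega) (by omega)

theorem leaves_node_pair (a b : PTree) : (node [a, b]).leaves = a.leaves ++ b.leaves := by
  simp [leaves, List.attach]

theorem cophen_node_pair (a b : PTree) (i j : ℕ) : (node [a, b]).cophen i j =
    (if i ∈ a.leaves ∧ j ∈ a.leaves then 1 + a.cophen i j else 0) +
      (if i ∈ b.leaves ∧ j ∈ b.leaves then 1 + b.cophen i j else 0) := by
  simp [cophen, List.attach]

theorem isBinary_node_pair {a b : PTree} : IsBinary (node [a, b]) ↔ IsBinary a ∧ IsBinary b := by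
  simp [IsBinary]

theorem maxBalanced_node_pair {a b : PTree} : MaxBalanced (node [a, b]) ↔
    (a.leaves.length ≤ b.leaves.length + 1 ∧ b.leaves.length ≤ a.leaves.length + 1) ∧
      MaxBalanced a ∧ MaxBalanced b := by
  rw [MaxBalanced, abs_sub_le_iff]
  constructor <;> rintro ⟨h, ha, hb⟩ <;> exact ⟨by omega, ha, hb⟩

@[elab_as_elim]
theorem IsBinary.induction {motive : ∀ T, IsBinary T → Prop}
    (leaf : ∀ i h, motive (leaf i) h)
    (node : ∀ a b ha hb h, motive a ha → motive b hb → motive (node [a, b]) h) :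
    ∀ {T} (h : IsBinary T), motive T h
  | .leaf i, h => leaf i h
  | .node [a, b], h =>
    node a b _ _ h (IsBinary.induction leaf node (isBinary_node_pair.1 h).1)
      (IsBinary.induction leaf node (isBinary_node_pair.1 h).2)
  | .node [], h | .node [_], h | .node (_ :: _ :: _ :: _), h => by simp [IsBinary] at h

theorem sum_sum_ite_lt_one_add_cophen (t : PTree) :
    ∑ i ∈ t.leaves.toFinset, ∑ j ∈ t.leaves.toFinset, (if i < j then 1 + t.cophen i j else 0) =
      Phi t + t.leaves.toFinset.card.choose 2 := by
  simp only [ite_add_zero, Finset.sum_add_distrib, sum_sum_ite_lt_eq_choose_two, Phi]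
  ring

theorem phi_node_pair (a b : PTree) : Phi (node [a, b]) =
    Phi a + a.leaves.toFinset.card.choose 2 + (Phi b + b.leaves.toFinset.card.choose 2) := by
  set A := a.leaves.toFinset
  set B := b.leaves.toFinset
  have hleaves : (node [a, b]).leaves.toFinset = A ∪ B := by simp [A, B, leaves_node_pair]
  have hcophen : ∀ i j, (if i < j then (node [a, b]).cophen i j else 0) =
      (if i ∈ A ∧ j ∈ A then (if i < j then 1 + a.cophen i j else 0) else 0) +
        (if i ∈ B ∧ j ∈ B then (if i < j then 1 + b.cophen i j else 0) else 0) := by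
    intro i j
    rw [cophen_node_pair]
    simp only [A, B, List.mem_toFinset]
    split_ifs <;> simp
  rw [Phi, hleaves]
  simp only [hcophen, Finset.sum_add_distrib, sum_sum_ite_mem_and_mem Finset.subset_union_left,
    sum_sum_ite_mem_and_mem Finset.subset_union_right, sum_sum_ite_lt_one_add_cophen, A, B]

theorem phiMin_le_phi {T : PTree} (hT : IsBinary T) (hnd : T.leaves.Nodup) :
    phiMin T.leaves.length ≤ Phi T := by
  induction hT using IsBinary.induction with
  | leaf i => simp [phiMin, halvingSum, leaves]
  | node a b _ _ _ iha ihb =>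
    rw [leaves_node_pair] at hnd ⊢
    have ha := iha hnd.of_append_left
    have hb := ihb hnd.of_append_right
    rw [phi_node_pair, List.toFinset_card_of_nodup hnd.of_append_left,
      List.toFinset_card_of_nodup hnd.of_append_right, List.length_append]
    have := phiMin_add_le_phiMinChild a.leaves.length b.leaves.length
    unfold phiMinChild at this
    omega

theorem phi_eq_phiMin_iff {T : PTree} (hT : IsBinary T) (hnd : T.leaves.Nodup) :
    Phi T = phiMin T.leaves.length ↔ MaxBalanced T := by
  induction hT using IsBinary.induction with
  | leaf i => simp [Phi, phiMin, halvingSum, leaves, cophen, MaxBalanced]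
  | node a b hba hbb _ iha ihb =>
    rw [leaves_node_pair] at hnd ⊢
    have ha := phiMin_le_phi hba hnd.of_append_left
    have hb := phiMin_le_phi hbb hnd.of_append_right
    rw [phi_node_pair, List.toFinset_card_of_nodup hnd.of_append_left,
      List.toFinset_card_of_nodup hnd.of_append_right, List.length_append,
      maxBalanced_node_pair, ← iha hnd.of_append_left, ← ihb hnd.of_append_right,
      ← phiMinChild_add_eq_phiMin_iff]
    have := phiMin_add_le_phiMinChild a.leaves.length b.leaves.length
    unfold phiMinChild at this ⊢
    omega

theorem IsBinary.proper {T : PTree} (hT : IsBinary T) : Proper T := by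
  induction hT using IsBinary.induction with
  | leaf i => simp [Proper]
  | node a b _ _ _ ha hb => simp [Proper, ha, hb]

theorem IsBinary.length_leaves_pos {T : PTree} (hT : IsBinary T) : 0 < T.leaves.length := by
  induction hT using IsBinary.induction with
  | leaf i => simp [leaves]
  | node a b _ _ _ ha _ => simp [leaves_node_pair, ha]

theorem IsPhylo.length_leaves {n : ℕ} {T : PTree} (hT : IsPhylo n T) : T.leaves.length = n := by
  rw [← List.toFinset_card_of_nodup hT.2.1, hT.2.2, Nat.card_Icc, Nat.add_sub_cancel]

theorem isPhylo_of_leaves_eq_range' {n : ℕ} {T : PTree} (hT : IsBinary T)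
    (hleaves : T.leaves = List.range' 1 n) : IsPhylo n T := by
  refine ⟨hT.proper, hleaves ▸ List.nodup_range', ?_⟩
  ext i
  simp only [hleaves, List.mem_toFinset, List.mem_range'_1, Finset.mem_Icc]
  omega

theorem exists_maxBalanced_leaves_eq_range' (a : ℕ) {n : ℕ} (hn : 0 < n) :
    ∃ T, IsBinary T ∧ MaxBalanced T ∧ T.leaves = List.range' a n := by
  induction n using Nat.strong_induction_on generalizing a with
  | _ n ih =>
    obtain rfl | hn := (Nat.one_le_iff_ne_zero.2 hn.ne').eq_or_lt
    · exact ⟨.leaf a, by simp [IsBinary], by simp [MaxBalanced], by simp [leaves]⟩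
    obtain ⟨l, hl, hlbal, hlleaves⟩ := ih ((n + 1) / 2) (by omega) a (by omega)
    obtain ⟨r, hr, hrbal, hrleaves⟩ := ih (n / 2) (by omega) (a + (n + 1) / 2) (by omega)
    refine ⟨.node [l, r], isBinary_node_pair.2 ⟨hl, hr⟩, maxBalanced_node_pair.2 ⟨?_, hlbal, hrbal⟩,
      ?_⟩
    · simp only [hlleaves, hrleaves, List.length_range']
      omega
    · rw [leaves_node_pair, hlleaves, hrleaves, List.range'_append_1]
      congr 1
      omega

end PTree

theorem phi_min_iff_maximally_balanced (n : ℕ) (T : PTree)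
    (hT : PTree.IsPhylo n T) (hb : PTree.IsBinary T) :
    (∀ T', PTree.IsPhylo n T' → PTree.IsBinary T' → PTree.Phi T ≤ PTree.Phi T') ↔
      PTree.MaxBalanced T := by
  have hn : T.leaves.length = n := hT.length_leaves
  obtain ⟨B, hB, hBbal, hBleaves⟩ :=
    PTree.exists_maxBalanced_leaves_eq_range' 1 (hn ▸ hb.length_leaves_pos)
  have hBphylo : PTree.IsPhylo n B := PTree.isPhylo_of_leaves_eq_range' hB hBleaves
  have hBphi : PTree.Phi B = PTree.phiMin n := by
    simpa [hBphylo.length_leaves] using (PTree.phi_eq_phiMin_iff hB hBphylo.2.1).2 hBbal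
  rw [← PTree.phi_eq_phiMin_iff hb hT.2.1, hn]
  constructor
  · intro hmin
    exact le_antisymm (hBphi ▸ hmin B hBphylo hB) (hn ▸ PTree.phiMin_le_phi hb hT.2.1)
  · intro hphi T' hT' hb'
    rw [hphi, ← hT'.length_leaves]
    exact PTree.phiMin_le_phi hb' hT'.2.1
end
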